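/- Let A and B be finite groups and let C be a subgroup of A × B. Suppose |A| < |B : N| for every proper normal subgroup N of B. Then either C ≤ A × B₁ for some proper subgroup B₁ < B, or C = A₁ × B for some subgroup A₁ ≤ A. -/

import Mathlib

/-!
If `C` projects onto `B`, Goursat's lemma identifies `B ⧸ N`, for the normal subgroup
`N = {b | (1, b) ∈ C}`, with a quotient of the image of `C` in `A`; so `|B : N|` divides `|A|`.
The hypothesis then forces `N = B`, i.e. `1 × B ≤ C`, and `C` is the product of its image in `A`
with `B`.
-/

open Function

namespace Subgroup

variable {G H : Type*} [Group G] [Group H]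

lemma goursatSnd_index_dvd_card (C : Subgroup (G × H)) (hC : Surjective (Prod.snd ∘ C.subtype)) :
    C.goursatSnd.index ∣ Nat.card G := by
  let p₁ : C →* G := (MonoidHom.fst G H).comp C.subtype
  calc C.goursatSnd.index ∣ p₁.ker.index := index_map_dvd _ hC
    _ = Nat.card p₁.range := index_ker p₁
    _ ∣ Nat.card G := card_subgroup_dvd_card _

lemma eq_prod_top_of_goursatSnd_eq_top {C : Subgroup (G × H)} (hC : C.goursatSnd = ⊤) :
    C = (C.map (MonoidHom.fst G H)).prod ⊤ := by
  refine le_antisymm (fun x hx ↦ ⟨⟨x, hx, rfl⟩, mem_top _⟩) ?_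
  rintro ⟨a, b⟩ ⟨⟨⟨a', b'⟩, hab', rfl⟩, -⟩
  have hb : ((1 : G), b'⁻¹ * b) ∈ C := mem_goursatSnd.1 (hC ▸ mem_top _)
  simpa using mul_mem hab' hb

end Subgroup

theorem stmt_11_general {A B : Type*} [Group A] [Group B] [Fintype A]
    (C : Subgroup (A × B))
    (h : ∀ N : Subgroup B, N.Normal → N ≠ ⊤ → Nat.card A < N.index) :
    (∃ B₁ : Subgroup B, B₁ ≠ ⊤ ∧ C ≤ (⊤ : Subgroup A).prod B₁) ∨
    (∃ A₁ : Subgroup A, C = A₁.prod ⊤) := by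
  by_cases hC : Surjective (Prod.snd ∘ C.subtype)
  · have := Subgroup.normal_goursatSnd hC
    have hN : C.goursatSnd = ⊤ := by
      by_contra hN
      have hle := Nat.le_of_dvd Nat.card_pos (C.goursatSnd_index_dvd_card hC)
      exact (h _ ‹_› hN).not_ge hle
    exact .inr ⟨_, Subgroup.eq_prod_top_of_goursatSnd_eq_top hN⟩
  · refine .inl ⟨C.map (MonoidHom.snd A B), fun htop ↦ hC fun b ↦ ?_,
      fun x hx ↦ ⟨Subgroup.mem_top _, x, hx, rfl⟩⟩
    obtain ⟨x, hx, rfl⟩ := htop ▸ Subgroup.mem_top b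
    exact ⟨⟨x, hx⟩, rfl⟩

theorem stmt_11 {A B : Type*} [Group A] [Group B] [Fintype A] [Fintype B]
    (C : Subgroup (A × B))
    (h : ∀ N : Subgroup B, N.Normal → N ≠ ⊤ → Nat.card A < N.index) :
    (∃ B₁ : Subgroup B, B₁ ≠ ⊤ ∧ C ≤ (⊤ : Subgroup A).prod B₁) ∨
    (∃ A₁ : Subgroup A, C = A₁.prod ⊤) :=
  stmt_11_general C h
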